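/- arXiv:1809.02177 — 5 statements merged into one kernel-verified Lean document; each statement's English description precedes it below -/
import Mathlib

section
/- For every integer $n \ge 2$, $\zeta(n) = \frac{1}{(n-1)!}\int_{-\infty}^{\infty}\big(\log(1+e^s)\big)^{n-1} - \big(\max(0,s)\big)^{n-1}\,ds$. -/
/-!
Write `f(s) = log (1 + exp s)` and `g(s) = max 0 s`. Since `f' = 1 - 1 / (1 + exp s)` and
`g ^ m * g' = g ^ m`, the integrable function `f ^ (m + 1) - g ^ (m + 1)` has derivative
`(m + 1) * (f ^ m - g ^ m - f ^ m / (1 + exp s))`, whose integral therefore vanishes. Hence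
`∫ (f ^ m - g ^ m) = ∫ f ^ m / (1 + exp s)`, and the substitution `u = f(s)`
(so `exp u = 1 + exp s`) turns this into `∫₀^∞ u ^ m / (exp u - 1) du`, the Mellin transform
of `∑ₖ exp (-(k + 1) u)`, which is `m! ζ(m + 1)`.
-/

open MeasureTheory Real Set Filter Topology

noncomputable def softplus (s : ℝ) : ℝ := log (1 + exp s)

lemma exp_softplus (s : ℝ) : exp (softplus s) = 1 + exp s :=
  exp_log (by positivity)

lemma softplus_pos (s : ℝ) : 0 < softplus s :=
  log_pos (lt_add_of_pos_right 1 (exp_pos s))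

lemma softplus_le_exp (s : ℝ) : softplus s ≤ exp s := by
  rw [softplus]
  linarith [log_le_sub_one_of_pos (show 0 < 1 + exp s by positivity)]

lemma softplus_eq_max_add_softplus_neg_abs (s : ℝ) :
    softplus s = max 0 s + softplus (-|s|) := by
  rcases le_total s 0 with hs | hs
  · rw [max_eq_left hs, abs_of_nonpos hs, neg_neg, zero_add]
  · have : 1 + exp s = exp s * (1 + exp (-s)) := by
      rw [mul_add, mul_one, ← exp_add, add_neg_cancel, exp_zero, add_comm]
    rw [max_eq_right hs, abs_of_nonneg hs, softplus, softplus, this,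
      log_mul (exp_pos s).ne' (by positivity), log_exp]

lemma max_zero_le_softplus (s : ℝ) : max 0 s ≤ softplus s := by
  linarith [softplus_eq_max_add_softplus_neg_abs s, softplus_pos (-|s|)]

lemma softplus_sub_max_zero_le (s : ℝ) : softplus s - max 0 s ≤ exp (-|s|) := by
  linarith [softplus_eq_max_add_softplus_neg_abs s, softplus_le_exp (-|s|)]

lemma softplus_le_one_add_abs (s : ℝ) : softplus s ≤ 1 + |s| := by
  have hmax : max 0 s ≤ |s| := max_le (abs_nonneg s) (le_abs_self s)
  have hexp : exp (-|s|) ≤ 1 := exp_le_one_iff.2 (neg_nonpos.2 (abs_nonneg s))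
  linarith [softplus_sub_max_zero_le s]

lemma hasDerivAt_softplus (s : ℝ) : HasDerivAt softplus (exp s / (1 + exp s)) s :=
  ((hasDerivAt_exp s).const_add 1).log (by positivity)

@[fun_prop]
lemma continuous_softplus : Continuous softplus :=
  continuous_iff_continuousAt.2 fun s => (hasDerivAt_softplus s).continuousAt

lemma softplus_injective : Function.Injective softplus := fun x y h => by
  simpa [exp_softplus] using congrArg exp h

lemma range_softplus : range softplus = Ioi 0 := by
  refine (range_subset_iff.2 softplus_pos).antisymm fun u (hu : 0 < u) => ⟨log (exp u - 1), ?_⟩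
  rw [softplus, exp_log (sub_pos.2 (one_lt_exp_iff.2 hu)), add_sub_cancel, log_exp]

lemma one_add_abs_pow_mul_exp_neg_abs_le (m : ℕ) (s : ℝ) :
    (1 + |s|) ^ m * exp (-|s|) ≤ (m + 2).factorial * exp 1 * (1 + s ^ 2)⁻¹ := by
  have hexp := pow_div_factorial_le_exp (1 + |s|) (by positivity) (m + 2)
  rw [div_le_iff₀ (by positivity), exp_add] at hexp
  have hsq : 1 + s ^ 2 ≤ (1 + |s|) ^ 2 := by nlinarith [abs_nonneg s, sq_abs s]
  rw [le_mul_inv_iff₀ (by positivity)]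
  calc (1 + |s|) ^ m * exp (-|s|) * (1 + s ^ 2)
      ≤ (1 + |s|) ^ (m + 2) * exp (-|s|) := by
        rw [pow_add, mul_right_comm]
        gcongr
    _ ≤ exp 1 * exp |s| * (m + 2).factorial * exp (-|s|) := by gcongr
    _ = (m + 2).factorial * exp 1 := by
        rw [mul_right_comm, mul_assoc (exp 1), ← exp_add, add_neg_cancel, exp_zero]
        ring

lemma integrable_one_add_abs_pow_mul_exp_neg_abs (m : ℕ) :
    Integrable fun s : ℝ => (1 + |s|) ^ m * exp (-|s|) :=
  (integrable_inv_one_add_sq.const_mul _).mono' (by fun_prop) <| ae_of_all _ fun s => by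
    rw [norm_of_nonneg (by positivity)]
    exact one_add_abs_pow_mul_exp_neg_abs_le m s

lemma abs_softplus_pow_sub_max_zero_pow_le (m : ℕ) (s : ℝ) :
    |softplus s ^ m - max 0 s ^ m| ≤ m * ((1 + |s|) ^ m * exp (-|s|)) := by
  have hle := max_zero_le_softplus s
  have hpow : softplus s ^ (m - 1) ≤ (1 + |s|) ^ m :=
    (pow_le_pow_left₀ (softplus_pos s).le (softplus_le_one_add_abs s) _).trans
      (pow_le_pow_right₀ (by simp) (by omega))
  calc |softplus s ^ m - max 0 s ^ m|
      ≤ |softplus s - max 0 s| * m * max |softplus s| |max 0 s| ^ (m - 1) :=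
        abs_pow_sub_pow_le ..
    _ ≤ exp (-|s|) * m * (1 + |s|) ^ m := by
        rw [abs_of_nonneg (sub_nonneg.2 hle), abs_of_nonneg (le_max_left 0 s),
          abs_of_pos (softplus_pos s), max_eq_left hle]
        exact mul_le_mul (mul_le_mul_of_nonneg_right (softplus_sub_max_zero_le s) m.cast_nonneg)
          hpow (pow_nonneg (softplus_pos s).le _) (by positivity)
    _ = m * ((1 + |s|) ^ m * exp (-|s|)) := by ring

lemma softplus_pow_div_one_add_exp_le {m : ℕ} (hm : m ≠ 0) (s : ℝ) :
    softplus s ^ m / (1 + exp s) ≤ (1 + |s|) ^ m * exp (-|s|) := by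
  obtain ⟨k, rfl⟩ := Nat.exists_eq_succ_of_ne_zero hm
  have hdiv : softplus s / (1 + exp s) ≤ (1 + |s|) * exp (-|s|) := by
    rcases le_total 0 s with hs | hs
    · rw [abs_of_nonneg hs, exp_neg, div_eq_mul_inv]
      gcongr
      · simpa [abs_of_nonneg hs] using softplus_le_one_add_abs s
      · linarith
    · rw [abs_of_nonpos hs, neg_neg]
      calc softplus s / (1 + exp s) ≤ softplus s :=
            div_le_self (softplus_pos s).le (by linarith [exp_pos s])
        _ ≤ exp s := softplus_le_exp s
        _ ≤ (1 - s) * exp s := le_mul_of_one_le_left (exp_pos s).le (by linarith)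
  calc softplus s ^ (k + 1) / (1 + exp s) = softplus s ^ k * (softplus s / (1 + exp s)) := by ring
    _ ≤ (1 + |s|) ^ k * ((1 + |s|) * exp (-|s|)) :=
        mul_le_mul (pow_le_pow_left₀ (softplus_pos s).le (softplus_le_one_add_abs s) k) hdiv
          (div_nonneg (softplus_pos s).le (by positivity)) (by positivity)
    _ = (1 + |s|) ^ (k + 1) * exp (-|s|) := by ring

lemma integrable_softplus_pow_sub_max_zero_pow (m : ℕ) :
    Integrable fun s => softplus s ^ m - max 0 s ^ m :=
  ((integrable_one_add_abs_pow_mul_exp_neg_abs m).const_mul m).mono' (by fun_prop) <|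
    ae_of_all _ fun s => abs_softplus_pow_sub_max_zero_pow_le m s

lemma integrable_softplus_pow_div_one_add_exp {m : ℕ} (hm : m ≠ 0) :
    Integrable fun s => softplus s ^ m / (1 + exp s) :=
  (integrable_one_add_abs_pow_mul_exp_neg_abs m).mono'
    (continuous_softplus.pow m |>.div (by fun_prop) fun s => by positivity).aestronglyMeasurable <|
    ae_of_all _ fun s => by
      rw [norm_of_nonneg (by have := softplus_pos s; positivity)]
      exact softplus_pow_div_one_add_exp_le hm s

lemma hasDerivAt_max_zero_pow {m : ℕ} (hm : m ≠ 0) (s : ℝ) :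
    HasDerivAt (fun x => max 0 x ^ (m + 1)) ((m + 1) * max 0 s ^ m) s := by
  rcases lt_trichotomy s 0 with hs | rfl | hs
  · have : (fun x => max 0 x ^ (m + 1)) =ᶠ[𝓝 s] fun _ => 0 := by
      filter_upwards [Iio_mem_nhds hs] with x (hx : x < 0)
      simp [max_eq_left hx.le]
    simpa [max_eq_left hs.le, hm] using (hasDerivAt_const s (0 : ℝ)).congr_of_eventuallyEq this
  · rw [← hasDerivWithinAt_univ, ← Iic_union_Ici (a := 0)]
    refine HasDerivWithinAt.union ?_ ?_
    · simpa [hm] using (hasDerivWithinAt_const (0 : ℝ) (Iic 0) (0 : ℝ)).congr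
        (fun x (hx : x ≤ 0) => by simp [max_eq_left hx]) (by simp)
    · refine ((hasDerivWithinAt_pow (m + 1) 0).congr (fun x (hx : 0 ≤ x) => ?_) ?_).congr_deriv ?_
      · rw [max_eq_right hx]
      · simp
      · simp [hm]
  · have : (fun x => max 0 x ^ (m + 1)) =ᶠ[𝓝 s] fun x => x ^ (m + 1) := by
      filter_upwards [Ioi_mem_nhds hs] with x hx
      rw [max_eq_right hx.le]
    simpa [max_eq_right hs.le] using (hasDerivAt_pow (m + 1) s).congr_of_eventuallyEq this

lemma integral_softplus_pow_sub_max_zero_pow {m : ℕ} (hm : m ≠ 0) :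
    ∫ s, softplus s ^ m - max 0 s ^ m = ∫ s, softplus s ^ m / (1 + exp s) := by
  have hderiv (s : ℝ) : HasDerivAt (fun x => softplus x ^ (m + 1) - max 0 x ^ (m + 1))
      ((m + 1) * ((softplus s ^ m - max 0 s ^ m) - softplus s ^ m / (1 + exp s))) s := by
    refine (((hasDerivAt_softplus s).fun_pow (m + 1)).sub
      (hasDerivAt_max_zero_pow hm s)).congr_deriv ?_
    have : 1 + exp s ≠ 0 := by positivity
    push_cast
    field_simp
    ring
  have h := integral_eq_zero_of_hasDerivAt_of_integrable hderiv
    (((integrable_softplus_pow_sub_max_zero_pow m).sub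
      (integrable_softplus_pow_div_one_add_exp hm)).const_mul _)
    (integrable_softplus_pow_sub_max_zero_pow (m + 1))
  rw [integral_const_mul, integral_sub (integrable_softplus_pow_sub_max_zero_pow m)
    (integrable_softplus_pow_div_one_add_exp hm)] at h
  exact sub_eq_zero.1 ((mul_eq_zero.1 h).resolve_left (by positivity))

lemma integral_softplus_pow_div_one_add_exp (m : ℕ) :
    ∫ s, softplus s ^ m / (1 + exp s) = ∫ u in Ioi 0, u ^ m / (exp u - 1) := by
  rw [← range_softplus, ← image_univ, integral_image_eq_integral_abs_deriv_smul MeasurableSet.univ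
    (fun s _ => (hasDerivAt_softplus s).hasDerivWithinAt) softplus_injective.injOn,
    setIntegral_univ]
  refine integral_congr_ae (ae_of_all _ fun s => ?_)
  dsimp only
  have : 1 + exp s ≠ 0 := by positivity
  rw [exp_softplus, add_sub_cancel_left, abs_of_pos (by positivity), smul_eq_mul]
  field_simp

lemma hasSum_exp_neg_succ_mul {t : ℝ} (ht : 0 < t) :
    HasSum (fun k : ℕ => exp (-((k : ℝ) + 1) * t)) (1 / (exp t - 1)) := by
  have hr : exp (-t) < 1 := exp_lt_one_iff.2 (neg_lt_zero.2 ht)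
  have h := (hasSum_geometric_of_lt_one (exp_pos _).le hr).mul_left (exp (-t))
  have hsum : exp (-t) * (1 - exp (-t))⁻¹ = 1 / (exp t - 1) := by
    have : exp t - 1 ≠ 0 := (sub_pos.2 (one_lt_exp_iff.2 ht)).ne'
    rw [exp_neg]
    field_simp
  have hterm : (fun k : ℕ => exp (-((k : ℝ) + 1) * t)) = fun k => exp (-t) * exp (-t) ^ k := by
    funext k
    rw [← exp_nat_mul, ← exp_add]
    ring_nf
  rwa [hterm, ← hsum]

lemma hasSum_integral_pow_div_exp_sub_one {m : ℕ} (hm : m ≠ 0) :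
    HasSum (fun k : ℕ => (m.factorial : ℝ) / ((k : ℝ) + 1) ^ (m + 1))
      (∫ u in Ioi 0, u ^ m / (exp u - 1)) := by
  have hsum : Summable fun k : ℕ => ‖(1 : ℂ)‖ / ((k : ℝ) + 1) ^ ((m : ℂ) + 1).re := by
    have := (summable_one_div_nat_add_rpow 1 (m + 1)).2 (by norm_cast; omega)
    refine this.congr fun k => ?_
    rw [abs_of_pos (by positivity)]
    simp
  have := hasSum_mellin (a := fun _ => 1) (p := fun k : ℕ => (k : ℝ) + 1)
    (F := fun t => ((1 / (exp t - 1) : ℝ) : ℂ)) (s := m + 1)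
    (fun k => Or.inr (by positivity)) (by simp; positivity)
    (fun t ht => by simpa using Complex.hasSum_ofReal.2 (hasSum_exp_neg_succ_mul ht)) hsum
  rw [← Complex.hasSum_ofReal]
  convert this using 1
  · ext k
    rw [Complex.Gamma_nat_eq_factorial]
    norm_cast
    simp
  · rw [mellin, ← integral_complex_ofReal]
    refine setIntegral_congr_fun measurableSet_Ioi fun u _ => ?_
    simp [div_eq_mul_inv]

theorem stmt6 (n : ℕ) (hn : 2 ≤ n) :
    (∑' k : ℕ, 1 / ((k : ℝ) + 1) ^ n)
      = (1 / ((n - 1).factorial : ℝ)) *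
          ∫ s : ℝ, (Real.log (1 + Real.exp s)) ^ (n - 1) - (max 0 s) ^ (n - 1) := by
  obtain ⟨m, rfl⟩ : ∃ m, n = m + 1 := ⟨n - 1, by omega⟩
  have hm : m ≠ 0 := by omega
  have hfac : (m.factorial : ℝ) ≠ 0 := by positivity
  rw [Nat.add_sub_cancel]
  calc ∑' k : ℕ, 1 / ((k : ℝ) + 1) ^ (m + 1)
      = 1 / m.factorial * ∑' k : ℕ, (m.factorial : ℝ) / ((k : ℝ) + 1) ^ (m + 1) := by
        rw [← tsum_mul_left]
        congr 1 with k
        field_simp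
    _ = 1 / m.factorial * ∫ u in Ioi 0, u ^ m / (exp u - 1) := by
        rw [(hasSum_integral_pow_div_exp_sub_one hm).tsum_eq]
    _ = 1 / m.factorial * ∫ s, softplus s ^ m - max 0 s ^ m := by
        rw [integral_softplus_pow_sub_max_zero_pow hm, integral_softplus_pow_div_one_add_exp]
end

section
/- $\zeta(3) = \frac{1}{2}\int_{-\infty}^{\infty}\big(\log(1+e^s)\big)^2 - \big(\max(0,s)\big)^2\,ds$. -/
/-!
Write `u s = log (1 + exp (-s))`. Since `log (1 + exp s) = s + u s`, the integrand is `u (-s) ^ 2`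
for `s < 0` and `u s ^ 2 + 2 * s * u s` for `s > 0`, so the integral is
`2 ∫₀^∞ u ^ 2 + 2 ∫₀^∞ s u`.

For `c > 0`, `ψ_c = logInvolution c` is a decreasing involution of `(0, ∞)`, because
`(exp (ψ_c s) - 1) (exp s - 1) = c`; for such an involution the layer-cake formula gives
`∫ ψ ^ 2 = 2 ∫ s ψ s`. Expanding `ψ_1 s = -log (1 - exp (-s)) = ∑ exp (-n s) / n` gives
`∫ s ψ_1 s = ζ(3)`, and the identities `u = ψ_2 - ψ_1` and `ψ_1 (2 s) = 2 ψ_1 s - ψ_2 s`, together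
with rescaling, give `∫ s ψ_2 s = 7/4 ζ(3)`, `∫ u ^ 2 = ζ(3)/4` and `∫ s u = 3/4 ζ(3)`.
-/

open MeasureTheory Real Set Filter

def HasSetIntegral (f : ℝ → ℝ) (s : Set ℝ) (I : ℝ) : Prop :=
  IntegrableOn f s ∧ ∫ x in s, f x = I

namespace HasSetIntegral

variable {f g : ℝ → ℝ} {s : Set ℝ} {I J : ℝ}

theorem add (hf : HasSetIntegral f s I) (hg : HasSetIntegral g s J) :
    HasSetIntegral (fun x => f x + g x) s (I + J) :=
  ⟨hf.1.add hg.1, by rw [integral_add hf.1 hg.1, hf.2, hg.2]⟩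

theorem sub (hf : HasSetIntegral f s I) (hg : HasSetIntegral g s J) :
    HasSetIntegral (fun x => f x - g x) s (I - J) :=
  ⟨hf.1.sub hg.1, by rw [integral_sub hf.1 hg.1, hf.2, hg.2]⟩

theorem const_mul (hf : HasSetIntegral f s I) (c : ℝ) :
    HasSetIntegral (fun x => c * f x) s (c * I) :=
  ⟨hf.1.const_mul c, by rw [integral_const_mul, hf.2]⟩

theorem congr (hf : HasSetIntegral f s I) (hs : MeasurableSet s) (h : EqOn f g s) (hI : I = J) :
    HasSetIntegral g s J :=
  ⟨hf.1.congr_fun h hs, by rw [← setIntegral_congr_fun hs h, hf.2, hI]⟩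

theorem comp_mul_left_Ioi (hf : HasSetIntegral f (Ioi 0) I) {b : ℝ} (hb : 0 < b) :
    HasSetIntegral (fun x => f (b * x)) (Ioi 0) (b⁻¹ * I) := by
  refine ⟨?_, ?_⟩
  · rw [integrableOn_Ioi_comp_mul_left_iff f 0 hb, mul_zero]
    exact hf.1
  · rw [integral_comp_mul_left_Ioi f 0 hb, mul_zero, hf.2, smul_eq_mul]

theorem sq_of_involutive {ψ : ℝ → ℝ} (hψ : Measurable ψ)
    (h_pos : ∀ s ∈ Ioi 0, 0 < ψ s) (h_anti : StrictAntiOn ψ (Ioi 0))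
    (h_inv : ∀ s ∈ Ioi 0, ψ (ψ s) = s) (h : HasSetIntegral (fun s => s * ψ s) (Ioi 0) I) :
    HasSetIntegral (fun s => ψ s ^ 2) (Ioi 0) (2 * I) := by
  have h_level : ∀ t ∈ Ioi (0 : ℝ), {s | t < ψ s} ∩ Ioi 0 = Ioo 0 (ψ t) := by
    intro t ht
    ext s
    have h_swap (hs : s ∈ Ioi 0) : t < ψ s ↔ s < ψ t := by
      rw [← h_anti.lt_iff_gt (h_pos t ht) hs, h_inv t ht]
    exact ⟨fun ⟨hts, hs⟩ => ⟨hs, (h_swap hs).1 hts⟩, fun ⟨hs, hst⟩ => ⟨(h_swap hs).2 hst, hs⟩⟩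
  have h_layer := lintegral_comp_eq_lintegral_meas_lt_mul (volume.restrict (Ioi 0))
    ((ae_restrict_iff' measurableSet_Ioi).2 (ae_of_all _ fun s hs => (h_pos s hs).le))
    hψ.aemeasurable (g := fun t => 2 * t)
    (fun t _ => (continuous_const.mul continuous_id).intervalIntegrable _ _)
    ((ae_restrict_iff' measurableSet_Ioi).2 (ae_of_all _ fun t ht => by simp at ht; positivity))
  have h_lin : ∫⁻ s in Ioi 0, ENNReal.ofReal (ψ s ^ 2) =
      ∫⁻ s in Ioi 0, ENNReal.ofReal (2 * (s * ψ s)) :=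
    calc ∫⁻ s in Ioi 0, ENNReal.ofReal (ψ s ^ 2)
        = ∫⁻ s in Ioi 0, ENNReal.ofReal (∫ t in 0..ψ s, 2 * t) := by
          refine lintegral_congr fun s => ?_
          rw [intervalIntegral.integral_const_mul, integral_id]
          ring_nf
      _ = ∫⁻ t in Ioi 0, volume.restrict (Ioi 0) {s | t < ψ s} * ENNReal.ofReal (2 * t) :=
          h_layer
      _ = ∫⁻ s in Ioi 0, ENNReal.ofReal (2 * (s * ψ s)) := by
          refine setLIntegral_congr_fun measurableSet_Ioi fun t ht => ?_
          rw [Measure.restrict_apply' measurableSet_Ioi, h_level t ht, Real.volume_Ioo, sub_zero,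
            ← ENNReal.ofReal_mul (h_pos t ht).le]
          ring_nf
  have h_nonneg : 0 ≤ᵐ[volume.restrict (Ioi 0)] fun s => 2 * (s * ψ s) :=
    (ae_restrict_iff' measurableSet_Ioi).2
      (ae_of_all _ fun s hs => by have := h_pos s hs; simp only [mem_Ioi] at hs; positivity)
  have h_sq_nonneg : 0 ≤ᵐ[volume.restrict (Ioi 0)] fun s => ψ s ^ 2 :=
    ae_of_all _ fun s => sq_nonneg _
  have h_fin := (h.1.const_mul 2).2
  rw [hasFiniteIntegral_iff_ofReal h_nonneg, ← h_lin] at h_fin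
  refine ⟨⟨(hψ.pow_const 2).aestronglyMeasurable,
    (hasFiniteIntegral_iff_ofReal h_sq_nonneg).2 h_fin⟩, ?_⟩
  rw [← h.2, ← integral_const_mul,
    integral_eq_lintegral_of_nonneg_ae h_sq_nonneg (hψ.pow_const 2).aestronglyMeasurable,
    integral_eq_lintegral_of_nonneg_ae h_nonneg (h.1.const_mul 2).1, h_lin]

end HasSetIntegral

theorem integrable_and_integral_eq_of_hasSum_of_nonneg {α : Type*} [MeasurableSpace α]
    {μ : Measure α} {F : ℕ → α → ℝ} {g : α → ℝ} {c : ℝ}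
    (hF_int : ∀ n, Integrable (F n) μ) (hF_nonneg : ∀ n, 0 ≤ᵐ[μ] F n)
    (hF_sum : ∀ᵐ a ∂μ, HasSum (fun n => F n a) (g a))
    (hc : HasSum (fun n => ∫ a, F n a ∂μ) c) :
    Integrable g μ ∧ ∫ a, g a ∂μ = c := by
  have hg_meas : AEStronglyMeasurable g μ :=
    aestronglyMeasurable_of_tendsto_ae atTop
      (fun n => Finset.aestronglyMeasurable_fun_sum _ fun i _ => (hF_int i).1)
      (hF_sum.mono fun a ha => ha.tendsto_sum_nat)
  have hF_nonneg' : ∀ᵐ a ∂μ, ∀ n, 0 ≤ F n a := ae_all_iff.2 hF_nonneg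
  have hg_nonneg : 0 ≤ᵐ[μ] g := by
    filter_upwards [hF_sum, hF_nonneg'] with a ha hna using ha.nonneg hna
  have hc_nonneg : 0 ≤ c := hc.nonneg fun n => integral_nonneg_of_ae (hF_nonneg n)
  have h_lin : ∫⁻ a, ENNReal.ofReal (g a) ∂μ = ENNReal.ofReal c :=
    calc ∫⁻ a, ENNReal.ofReal (g a) ∂μ = ∫⁻ a, ∑' n, ENNReal.ofReal (F n a) ∂μ := by
          refine lintegral_congr_ae ?_
          filter_upwards [hF_sum, hF_nonneg'] with a ha hna
          rw [← ENNReal.ofReal_tsum_of_nonneg hna ha.summable, ha.tsum_eq]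
      _ = ∑' n, ENNReal.ofReal (∫ a, F n a ∂μ) := by
          rw [lintegral_tsum fun n => (hF_int n).1.aemeasurable.ennreal_ofReal]
          exact tsum_congr fun n =>
            (ofReal_integral_eq_lintegral_ofReal (hF_int n) (hF_nonneg n)).symm
      _ = ENNReal.ofReal c := by
          rw [← ENNReal.ofReal_tsum_of_nonneg (fun n => integral_nonneg_of_ae (hF_nonneg n))
            hc.summable, hc.tsum_eq]
  refine ⟨⟨hg_meas, (hasFiniteIntegral_iff_ofReal hg_nonneg).2 (h_lin ▸ ENNReal.ofReal_lt_top)⟩,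
    ?_⟩
  rw [integral_eq_lintegral_of_nonneg_ae hg_nonneg hg_meas, h_lin, ENNReal.toReal_ofReal hc_nonneg]

theorem integral_eq_integral_Ioi_comp_neg_add {f : ℝ → ℝ}
    (h_neg : IntegrableOn (fun s => f (-s)) (Ioi 0)) (h_pos : IntegrableOn f (Ioi 0)) :
    ∫ s, f s = (∫ s in Ioi 0, f (-s)) + ∫ s in Ioi 0, f s := by
  have h_Iic : IntegrableOn f (Iic 0) := by
    rw [← (Measure.measurePreserving_neg (volume : Measure ℝ)).integrableOn_comp_preimage
      (Homeomorph.neg ℝ).measurableEmbedding]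
    simpa [Function.comp_def, neg_preimage, integrableOn_Ici_iff_integrableOn_Ioi] using h_neg
  rw [← intervalIntegral.integral_Iic_add_Ioi h_Iic h_pos, integral_comp_neg_Ioi, neg_zero]

theorem hasSetIntegral_mul_exp_neg_mul {b : ℝ} (hb : 0 < b) :
    HasSetIntegral (fun s => s * exp (-(b * s))) (Ioi 0) (1 / b ^ 2) := by
  have h_integral : ∫ s in Ioi 0, s * exp (-(b * s)) = 1 / b ^ 2 := by
    have h := integral_rpow_mul_exp_neg_mul_Ioi two_pos hb
    norm_num [rpow_one, Gamma_two] at h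
    simpa [div_pow] using h
  exact ⟨.of_integral_ne_zero (by rw [h_integral]; positivity), h_integral⟩

theorem exp_sub_one_pos {s : ℝ} (hs : 0 < s) : 0 < exp s - 1 :=
  sub_pos.2 (one_lt_exp_iff.2 hs)

theorem log_one_add_exp (s : ℝ) : log (1 + exp s) = s + log (1 + exp (-s)) := by
  rw [show 1 + exp s = exp s * (1 + exp (-s)) by rw [mul_add, ← exp_add]; simp [add_comm],
    log_mul (exp_ne_zero s) (by positivity), log_exp]

noncomputable def logInvolution (c s : ℝ) : ℝ := log (1 + c / (exp s - 1))

section logInvolution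

variable {c s : ℝ}

theorem logInvolution_eq_log_sub_log (hc : 0 ≤ c) (hs : 0 < s) :
    logInvolution c s = log (exp s - 1 + c) - log (exp s - 1) := by
  have h := exp_sub_one_pos hs
  rw [logInvolution, ← log_div (by positivity) h.ne', add_div, div_self h.ne']

theorem logInvolution_pos (hc : 0 < c) (hs : 0 < s) : 0 < logInvolution c s :=
  log_pos (lt_add_of_pos_right 1 (div_pos hc (exp_sub_one_pos hs)))

theorem logInvolution_logInvolution (hc : 0 < c) (hs : 0 < s) :
    logInvolution c (logInvolution c s) = s := by
  have h := exp_sub_one_pos hs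
  have h_exp : exp (logInvolution c s) - 1 = c / (exp s - 1) := by
    rw [logInvolution, exp_log (by positivity), add_sub_cancel_left]
  rw [logInvolution, h_exp, div_div_cancel₀ hc.ne', add_sub_cancel, log_exp]

theorem strictAntiOn_logInvolution (hc : 0 < c) : StrictAntiOn (logInvolution c) (Ioi 0) := by
  intro a ha b hb hab
  have ha' := exp_sub_one_pos ha
  have hb' := exp_sub_one_pos hb
  refine log_lt_log (by positivity) (add_lt_add_right ?_ 1)
  exact div_lt_div_of_pos_left hc ha' (by gcongr)

theorem measurable_logInvolution : Measurable (logInvolution c) := by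
  unfold logInvolution
  fun_prop

theorem logInvolution_one_two_mul (hs : 0 < s) :
    logInvolution 1 (2 * s) = 2 * logInvolution 1 s - logInvolution 2 s := by
  have h := exp_sub_one_pos hs
  have h_factor : exp (2 * s) - 1 = (exp s - 1) * (exp s + 1) := by
    rw [two_mul, exp_add]
    ring
  rw [logInvolution_eq_log_sub_log zero_le_one (by positivity),
    logInvolution_eq_log_sub_log zero_le_one hs, logInvolution_eq_log_sub_log zero_le_two hs,
    sub_add_cancel, sub_add_cancel, log_exp, log_exp, h_factor, log_mul h.ne' (by positivity),
    show exp s - 1 + 2 = exp s + 1 by ring]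
  ring

theorem logInvolution_two_sub_one (hs : 0 < s) :
    logInvolution 2 s - logInvolution 1 s = log (1 + exp (-s)) := by
  rw [logInvolution_eq_log_sub_log zero_le_two hs, logInvolution_eq_log_sub_log zero_le_one hs,
    sub_add_cancel, log_exp, show exp s - 1 + 2 = 1 + exp s by ring, log_one_add_exp s]
  ring

theorem hasSum_logInvolution_one (hs : 0 < s) :
    HasSum (fun n : ℕ => exp (-((n + 1) * s)) / (n + 1)) (logInvolution 1 s) := by
  have h_abs : |exp (-s)| < 1 := by
    rw [abs_of_pos (exp_pos _), exp_lt_one_iff]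
    linarith
  convert hasSum_pow_div_log_of_abs_lt_one h_abs using 1
  · ext n
    rw [← exp_nat_mul]
    push_cast
    ring_nf
  · rw [logInvolution_eq_log_sub_log zero_le_one hs, sub_add_cancel, log_exp,
      show 1 - exp (-s) = (exp s - 1) * exp (-s) by
        rw [sub_mul, exp_neg, mul_inv_cancel₀ (exp_ne_zero s)]; ring,
      log_mul (exp_sub_one_pos hs).ne' (exp_ne_zero _), log_exp]
    ring

theorem HasSetIntegral.logInvolution_sq (hc : 0 < c) {I : ℝ}
    (h : HasSetIntegral (fun s => s * logInvolution c s) (Ioi 0) I) :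
    HasSetIntegral (fun s => logInvolution c s ^ 2) (Ioi 0) (2 * I) :=
  h.sq_of_involutive measurable_logInvolution (fun _ => logInvolution_pos hc)
    (strictAntiOn_logInvolution hc) (fun _ => logInvolution_logInvolution hc)

end logInvolution

local notation "ζ₃" => ∑' n : ℕ, 1 / ((n : ℝ) + 1) ^ 3

theorem hasSetIntegral_mul_logInvolution_one :
    HasSetIntegral (fun s => s * logInvolution 1 s) (Ioi 0) ζ₃ := by
  have h_succ (n : ℕ) : (0 : ℝ) < n + 1 := n.cast_add_one_pos
  have h_summable : Summable fun n : ℕ => 1 / ((n : ℝ) + 1) ^ 3 := by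
    simpa using (summable_nat_add_iff 1).2 (summable_one_div_nat_pow.2 (by norm_num : 1 < 3))
  refine integrable_and_integral_eq_of_hasSum_of_nonneg
    (F := fun n s => s * exp (-((n + 1) * s)) / (n + 1))
    (fun n => (hasSetIntegral_mul_exp_neg_mul (h_succ n)).1.div_const _)
    (fun n => (ae_restrict_iff' measurableSet_Ioi).2 (ae_of_all _ fun s hs => ?_))
    ((ae_restrict_iff' measurableSet_Ioi).2 (ae_of_all _ fun s hs => ?_)) ?_
  · have := h_succ n
    simp only [mem_Ioi] at hs
    positivity
  · simpa only [mul_div_assoc] using (hasSum_logInvolution_one hs).mul_left s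
  · convert h_summable.hasSum using 2 with n
    rw [integral_div, (hasSetIntegral_mul_exp_neg_mul (h_succ n)).2]
    field_simp

theorem hasSetIntegral_mul_logInvolution_two :
    HasSetIntegral (fun s => s * logInvolution 2 s) (Ioi 0) (7 / 4 * ζ₃) := by
  have h := hasSetIntegral_mul_logInvolution_one
  refine ((h.const_mul 2).sub ((h.comp_mul_left_Ioi two_pos).const_mul 2⁻¹)).congr
    measurableSet_Ioi (fun s hs => ?_) (by ring)
  simp only [logInvolution_one_two_mul hs]
  ring

theorem hasSetIntegral_log_one_add_exp_neg_sq :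
    HasSetIntegral (fun s => log (1 + exp (-s)) ^ 2) (Ioi 0) (ζ₃ / 4) := by
  have h_one := hasSetIntegral_mul_logInvolution_one.logInvolution_sq one_pos
  have h_two := hasSetIntegral_mul_logInvolution_two.logInvolution_sq two_pos
  -- `2 u ^ 2 = ψ_1 (2 s) ^ 2 + ψ_2 s ^ 2 - 2 ψ_1 s ^ 2`, by the two identities of the header
  refine ((((h_one.comp_mul_left_Ioi two_pos).add h_two).sub (h_one.const_mul 2)).const_mul
    2⁻¹).congr measurableSet_Ioi (fun s hs => ?_) (by ring)
  simp only [← logInvolution_two_sub_one hs, logInvolution_one_two_mul hs]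
  ring

theorem hasSetIntegral_mul_log_one_add_exp_neg :
    HasSetIntegral (fun s => s * log (1 + exp (-s))) (Ioi 0) (3 / 4 * ζ₃) :=
  (hasSetIntegral_mul_logInvolution_two.sub hasSetIntegral_mul_logInvolution_one).congr
    measurableSet_Ioi (fun s hs => by simp only [← logInvolution_two_sub_one hs]; ring) (by ring)

theorem stmt7 :
    (∑' k : ℕ, 1 / ((k : ℝ) + 1) ^ 3)
      = (1 / 2) * ∫ s : ℝ, (Real.log (1 + Real.exp s)) ^ 2 - (max 0 s) ^ 2 := by
  have h_neg : HasSetIntegral (fun s => log (1 + exp (-s)) ^ 2 - max 0 (-s) ^ 2) (Ioi 0)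
      (ζ₃ / 4) :=
    hasSetIntegral_log_one_add_exp_neg_sq.congr measurableSet_Ioi
      (fun s hs => by simp [max_eq_left (neg_nonpos.2 (mem_Ioi.1 hs).le)]) rfl
  have h_pos : HasSetIntegral (fun s => log (1 + exp s) ^ 2 - max 0 s ^ 2) (Ioi 0)
      (7 / 4 * ζ₃) :=
    (hasSetIntegral_log_one_add_exp_neg_sq.add
      (hasSetIntegral_mul_log_one_add_exp_neg.const_mul 2)).congr measurableSet_Ioi
      (fun s hs => by simp only [log_one_add_exp s, max_eq_right (mem_Ioi.1 hs).le]; ring)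
      (by ring)
  rw [integral_eq_integral_Ioi_comp_neg_add h_neg.1 h_pos.1, h_neg.2, h_pos.2]
  ring
end

section
/- For any $\ell \ge 0$ and $k \ge 1$, the function $g_\ell(X_1,\dots,X_k) := \sum_{K \subset \{1,\dots,k\}} (-1)^{|K|}\big(\log(1+\sum_{j\in K} X_j)\big)^\ell$ satisfies a bound $|g_\ell(X_1,\dots,X_k)| \le C_\ell \prod_{j=1}^k X_j$ on $[0,1]^k$ for some constant $C_\ell > 0$. -/
open MeasureTheory Real

noncomputable def gfun (ℓ k : ℕ) (X : Fin k → ℝ) : ℝ :=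
  ∑ K : Finset (Fin k), (-1 : ℝ) ^ K.card * (Real.log (1 + ∑ j ∈ K, X j)) ^ ℓ

/-!
The sum defining `g_ℓ` is, up to the sign `(-1)^k`, the mixed finite difference of
`f t = log (1 + t) ^ ℓ` at `0` with steps `X₁, …, X_k`. Each difference in the direction `X_j`
is bounded by the mean value theorem by `X_j` times the same mixed difference of `f'` in the
remaining directions, so by induction `|g_ℓ(X)| ≤ sup_{[0,k]} |f⁽ᵏ⁾| · ∏ X_j`.
-/

open Finset

theorem ContDiffOn.continuousOn_iteratedDeriv_of_isOpen {𝕜 F : Type*} [NontriviallyNormedField 𝕜]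
    [NormedAddCommGroup F] [NormedSpace 𝕜 F] {f : 𝕜 → F} {s : Set 𝕜} {n : WithTop ℕ∞} {m : ℕ}
    (hf : ContDiffOn 𝕜 n f s) (hs : IsOpen s) (hmn : m ≤ n) :
    ContinuousOn (iteratedDeriv m f) s :=
  (hf.continuousOn_iteratedDerivWithin hmn hs.uniqueDiffOn).congr
    (iteratedDerivWithin_of_isOpen hs).symm

section MixedDiff

variable {ι : Type*} (f : ℝ → ℝ) (X : ι → ℝ)

noncomputable def mixedDiff (s : Finset ι) (x : ℝ) : ℝ :=
  ∑ K ∈ s.powerset, (-1 : ℝ) ^ K.card * f (x + ∑ j ∈ K, X j)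

variable {f X}

theorem mixedDiff_insert [DecidableEq ι] {a : ι} {s : Finset ι} (ha : a ∉ s) (x : ℝ) :
    mixedDiff f X (insert a s) x = mixedDiff f X s x - mixedDiff f X s (x + X a) := by
  rw [mixedDiff, sum_powerset_insert ha, sub_eq_add_neg, mixedDiff, mixedDiff,
    ← sum_neg_distrib]
  refine congrArg _ (sum_congr rfl fun K hK => ?_)
  have haK : a ∉ K := fun h => ha (mem_powerset.1 hK h)
  rw [card_insert_of_notMem haK, sum_insert haK, pow_succ]
  ring_nf

theorem hasDerivAt_mixedDiff {s : Finset ι} {x : ℝ}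
    (hf : ∀ K ∈ s.powerset, DifferentiableAt ℝ f (x + ∑ j ∈ K, X j)) :
    HasDerivAt (mixedDiff f X s) (mixedDiff (deriv f) X s x) x := by
  unfold mixedDiff
  exact HasDerivAt.fun_sum fun K hK => ((hf K hK).hasDerivAt.comp_add_const x _).const_mul _

theorem sum_mem_Icc_card {s K : Finset ι} (hK : K ⊆ s) (hX : ∀ j ∈ s, X j ∈ Set.Icc 0 1) :
    ∑ j ∈ K, X j ∈ Set.Icc (0 : ℝ) s.card := by
  refine ⟨sum_nonneg fun j hj => (hX j (hK hj)).1, ?_⟩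
  calc ∑ j ∈ K, X j ≤ ∑ _j ∈ K, (1 : ℝ) := sum_le_sum fun j hj => (hX j (hK hj)).2
    _ ≤ s.card := by simpa using Finset.card_le_card hK

theorem abs_mixedDiff_le [DecidableEq ι] {U : Set ℝ} (hU : IsOpen U) {M : ℝ} (s : Finset ι)
    (hX : ∀ j ∈ s, X j ∈ Set.Icc 0 1) (hf : ContDiffOn ℝ s.card f U) {x : ℝ}
    (hxU : Set.Icc x (x + s.card) ⊆ U)
    (hM : ∀ y ∈ Set.Icc x (x + s.card), |iteratedDeriv s.card f y| ≤ M) :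
    |mixedDiff f X s x| ≤ M * ∏ j ∈ s, X j := by
  induction s using Finset.induction_on generalizing f x with
  | empty => simpa [mixedDiff] using hM x (by simp)
  | insert a t ha ih =>
    simp only [card_insert_of_notMem ha, Nat.cast_succ] at hf hxU hM
    have hXa := hX a (mem_insert_self a t)
    have hXt := fun j hj => hX j (mem_insert_of_mem hj)
    have hf' : ContDiffOn ℝ t.card (deriv f) U := hf.deriv_of_isOpen hU le_rfl
    have hderiv : ∀ y ∈ Set.Icc x (x + X a),
        HasDerivAt (mixedDiff f X t) (mixedDiff (deriv f) X t y) y := by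
      refine fun y hy => hasDerivAt_mixedDiff fun K hK => ?_
      have hK' := sum_mem_Icc_card (mem_powerset.1 hK) hXt
      refine (hf.differentiableOn (by simp)).differentiableAt (hU.mem_nhds (hxU ?_))
      constructor <;> linarith [hy.1, hy.2, hK'.1, hK'.2, hXa.2]
    have hbound : ∀ y ∈ Set.Icc x (x + X a),
        |mixedDiff (deriv f) X t y| ≤ M * ∏ j ∈ t, X j := by
      refine fun y hy => ih hXt hf' (fun z hz => hxU ?_) fun z hz => ?_
      · constructor <;> linarith [hy.1, hy.2, hz.1, hz.2, hXa.2]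
      · rw [← iteratedDeriv_succ']
        exact hM z (by constructor <;> linarith [hy.1, hy.2, hz.1, hz.2, hXa.2])
    have hmvt := norm_image_sub_le_of_norm_deriv_le_segment'
      (fun y hy => (hderiv y hy).hasDerivWithinAt)
      (fun y hy => hbound y (Set.Ico_subset_Icc_self hy))
      (x + X a) ⟨by linarith [hXa.1], le_rfl⟩
    rw [mixedDiff_insert ha, prod_insert ha, abs_sub_comm]
    simp only [Real.norm_eq_abs, add_sub_cancel_left] at hmvt
    linarith

end MixedDiff

theorem stmt8_general (ℓ k : ℕ) :
    ∃ C > 0, ∀ X : Fin k → ℝ, (∀ j, X j ∈ Set.Icc (0:ℝ) 1) →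
      |gfun ℓ k X| ≤ C * ∏ j, X j := by
  set f : ℝ → ℝ := fun t => log (1 + t) ^ ℓ
  have hf : ContDiffOn ℝ k f (Set.Ioi (-1)) :=
    ((contDiffOn_const.add contDiffOn_id).log fun t ht => by
      simp only [Set.mem_Ioi, id] at ht ⊢; linarith).pow ℓ
  have hsub : Set.Icc (0 : ℝ) k ⊆ Set.Ioi (-1) := fun y hy => by
    simp only [Set.mem_Ioi]; linarith [hy.1]
  obtain ⟨M, hM⟩ := isCompact_Icc.exists_bound_of_continuousOn
    ((hf.continuousOn_iteratedDeriv_of_isOpen isOpen_Ioi le_rfl).mono hsub)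
  refine ⟨max M 1, by positivity, fun X hX => ?_⟩
  have key := abs_mixedDiff_le (x := 0) (M := max M 1) isOpen_Ioi univ (fun j _ => hX j)
    (f := f) (by simpa using hf) (by simpa using hsub)
    (by simpa using fun y hy => (hM y hy).trans (le_max_left _ _))
  simpa [mixedDiff, gfun, powerset_univ] using key

theorem stmt8 (ℓ k : ℕ) (hk : 1 ≤ k) :
    ∃ C > 0, ∀ X : Fin k → ℝ, (∀ j, X j ∈ Set.Icc (0:ℝ) 1) →
      |gfun ℓ k X| ≤ C * ∏ j, X j :=
  stmt8_general ℓ k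
end

section
/- For all integers $\ell \ge 1$, $k \ge 1$, and $m_1,\dots,m_k \ge 0$, the integral $I_{\ell; m_1,\dots,m_k} := \int_{[0,\infty)^k} s_1^{m_1}\cdots s_k^{m_k}\, g_\ell(e^{-s_1},\dots,e^{-s_k})\,ds_1\cdots ds_k$ converges absolutely. -/
/-! Pairing each `K ∌ j` with `insert j K` writes `g_ℓ(X)` as `2^(k-1)` differences of
`u ↦ log (1 + u) ^ ℓ` at points `X j` apart, so `|g_ℓ(X)| ≤ C X_j` for every `j` when
`0 ≤ X ≤ 1`. Taking `j` with `s_j` at least the mean of the `s_i` gives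
`|g_ℓ(e^{-s})| ≤ C ∏ e^{-s_i/k}`, and `∏ s_i^{m_i} e^{-s_i/k}` is integrable on the orthant,
being a product of one-dimensional Gamma integrands. -/
open MeasureTheory Real

open Finset

lemma log_one_add_add_sub_log_one_add_le {a b : ℝ} (ha : 0 ≤ a) (hb : 0 ≤ b) :
    log (1 + (a + b)) - log (1 + a) ≤ b := by
  rw [← log_div (by positivity) (by positivity)]
  calc _ ≤ (1 + (a + b)) / (1 + a) - 1 := log_le_sub_one_of_pos (by positivity)
    _ = b / (1 + a) := by field_simp; ring
    _ ≤ b := div_le_self hb (by linarith)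

lemma abs_log_one_add_add_pow_sub_le (ℓ : ℕ) {a b c : ℝ} (ha : 0 ≤ a) (hb : 0 ≤ b)
    (habc : a + b ≤ c) :
    |log (1 + (a + b)) ^ ℓ - log (1 + a) ^ ℓ| ≤ ℓ * log (1 + c) ^ (ℓ - 1) * b := by
  have hmono : log (1 + a) ≤ log (1 + (a + b)) := log_le_log (by positivity) (by linarith)
  have hdiff : |log (1 + (a + b)) - log (1 + a)| ≤ b := by
    rw [abs_of_nonneg (by linarith)]
    exact log_one_add_add_sub_log_one_add_le ha hb
  have hmax : max |log (1 + (a + b))| |log (1 + a)| ≤ log (1 + c) := by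
    rw [abs_of_nonneg (log_nonneg (by linarith)), abs_of_nonneg (log_nonneg (by linarith)),
      max_eq_left hmono]
    exact log_le_log (by positivity) (by linarith)
  calc _ ≤ _ := abs_pow_sub_pow_le _ _ ℓ
    _ ≤ b * ℓ * log (1 + c) ^ (ℓ - 1) := by gcongr
    _ = _ := by ring

lemma Finset.sum_powerset_insert_neg_one_pow_card_mul {ι R : Type*} [DecidableEq ι]
    [CommRing R] {s : Finset ι} {j : ι} (hj : j ∉ s) (F : Finset ι → R) :
    ∑ K ∈ (insert j s).powerset, (-1) ^ #K * F K =
      ∑ K ∈ s.powerset, (-1) ^ #K * (F K - F (insert j K)) := by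
  rw [sum_powerset_insert hj, ← sum_add_distrib]
  refine sum_congr rfl fun K hK => ?_
  rw [card_insert_of_notMem fun h => hj (mem_powerset.1 hK h)]
  ring

lemma abs_gfun_le (ℓ k : ℕ) {X : Fin k → ℝ} (hX₀ : ∀ i, 0 ≤ X i) (hX₁ : ∀ i, X i ≤ 1)
    (j : Fin k) :
    |gfun ℓ k X| ≤ 2 ^ (k - 1) * (ℓ * log (1 + k) ^ (ℓ - 1)) * X j := by
  have hsum_le (K : Finset (Fin k)) : ∑ i ∈ K, X i ≤ k :=
    calc ∑ i ∈ K, X i ≤ #K • (1 : ℝ) := sum_le_card_nsmul K X 1 fun i _ => hX₁ i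
      _ ≤ k := by simpa using K.card_le_univ
  have huniv : (univ : Finset (Fin k)) = insert j (univ.erase j) :=
    (insert_erase (mem_univ j)).symm
  rw [gfun, ← powerset_univ, huniv,
    sum_powerset_insert_neg_one_pow_card_mul (notMem_erase j univ)]
  calc _ ≤ ∑ K ∈ (univ.erase j).powerset, ℓ * log (1 + k) ^ (ℓ - 1) * X j := by
        refine (abs_sum_le_sum_abs _ _).trans (sum_le_sum fun K hK => ?_)
        have hjK : j ∉ K := fun h => notMem_erase j univ (mem_powerset.1 hK h)
        rw [abs_mul, abs_pow, abs_neg, abs_one, one_pow, one_mul, abs_sub_comm, sum_insert hjK,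
          add_comm (X j)]
        refine abs_log_one_add_add_pow_sub_le ℓ (sum_nonneg fun i _ => hX₀ i) (hX₀ j) ?_
        simpa [sum_insert hjK, add_comm] using hsum_le (insert j K)
    _ = _ := by
        rw [sum_const, card_powerset, card_erase_of_mem (mem_univ j), card_univ,
          Fintype.card_fin, nsmul_eq_mul]
        push_cast
        ring

lemma exists_sum_div_card_le {ι : Type*} [Fintype ι] [Nonempty ι] (s : ι → ℝ) :
    ∃ j, (∑ i, s i) / Fintype.card ι ≤ s j := by
  obtain ⟨j, -, hj⟩ :=
    exists_le_of_sum_le (f := fun _ => (∑ i, s i) / Fintype.card ι) (g := s)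
      univ_nonempty (by simp [sum_const, card_univ, nsmul_eq_mul, mul_div_cancel₀])
  exact ⟨j, hj⟩

lemma abs_gfun_exp_neg_le (ℓ : ℕ) {k : ℕ} (hk : 1 ≤ k) {s : Fin k → ℝ} (hs : ∀ j, 0 ≤ s j) :
    |gfun ℓ k (fun i => exp (-s i))| ≤
      2 ^ (k - 1) * (ℓ * log (1 + k) ^ (ℓ - 1)) * ∏ i, exp (-(1 / k) * s i) := by
  have : Nonempty (Fin k) := ⟨⟨0, hk⟩⟩
  obtain ⟨j, hj⟩ := exists_sum_div_card_le s
  rw [Fintype.card_fin] at hj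
  have hexp : exp (-s j) ≤ ∏ i, exp (-(1 / k) * s i) := by
    rw [← exp_sum, ← mul_sum, neg_mul, one_div_mul_eq_div]
    exact exp_le_exp.2 (neg_le_neg hj)
  have hlog : 0 ≤ log (1 + (k : ℝ)) := log_nonneg (le_add_of_nonneg_right k.cast_nonneg)
  refine (abs_gfun_le ℓ k (fun i => (exp_pos _).le)
    (fun i => exp_le_one_iff.2 (neg_nonpos.2 (hs i))) j).trans ?_
  gcongr

lemma integrableOn_pi_Ici_prod_pow_mul_exp_neg_mul {ι : Type*} [Fintype ι] (m : ι → ℕ)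
    {b : ℝ} (hb : 0 < b) :
    IntegrableOn (fun s : ι → ℝ => ∏ i, s i ^ m i * exp (-b * s i))
      (Set.univ.pi fun _ => Set.Ici 0) := by
  have h1 (n : ℕ) : IntegrableOn (fun x : ℝ => x ^ n * exp (-b * x)) (Set.Ici 0) := by
    rw [integrableOn_Ici_iff_integrableOn_Ioi]
    simpa [rpow_natCast] using integrableOn_rpow_mul_exp_neg_mul_rpow (s := n) (p := 1)
      (by linarith [n.cast_nonneg (α := ℝ)]) one_pos hb
  rw [IntegrableOn, volume_pi, Measure.restrict_pi_pi]
  exact Integrable.fintype_prod (f := fun i (x : ℝ) => x ^ m i * exp (-b * x)) fun i =>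
    h1 (m i)

theorem stmt9_general (ℓ k : ℕ) (hk : 1 ≤ k) (m : Fin k → ℕ) :
    MeasureTheory.IntegrableOn
      (fun s : Fin k → ℝ => (∏ j, s j ^ m j) * gfun ℓ k (fun i => Real.exp (-s i)))
      {s | ∀ j, 0 ≤ s j} := by
  have horthant : {s : Fin k → ℝ | ∀ j, 0 ≤ s j} = Set.univ.pi fun _ => Set.Ici 0 := by
    ext s; simp only [Set.mem_ofPred_eq, Set.mem_pi, Set.mem_univ, Set.mem_Ici, forall_const]
  rw [horthant]
  refine ((integrableOn_pi_Ici_prod_pow_mul_exp_neg_mul m (b := 1 / k) (by positivity)).const_mul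
    (2 ^ (k - 1) * (ℓ * log (1 + k) ^ (ℓ - 1)))).mono'
    (by unfold gfun; fun_prop : Measurable _).aestronglyMeasurable ?_
  filter_upwards [ae_restrict_mem (MeasurableSet.univ_pi fun _ => measurableSet_Ici)] with s hs
  have hs' (i : Fin k) : 0 ≤ s i := hs i (Set.mem_univ i)
  rw [prod_mul_distrib, mul_left_comm, norm_mul, norm_prod]
  simp_rw [norm_pow, Real.norm_eq_abs, abs_of_nonneg (hs' _)]
  exact mul_le_mul_of_nonneg_left (abs_gfun_exp_neg_le ℓ hk hs')
    (prod_nonneg fun i _ => pow_nonneg (hs' i) _)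

theorem stmt9 (ℓ k : ℕ) (hℓ : 1 ≤ ℓ) (hk : 1 ≤ k) (m : Fin k → ℕ) :
    MeasureTheory.IntegrableOn
      (fun s : Fin k → ℝ => (∏ j, s j ^ m j) * gfun ℓ k (fun i => Real.exp (-s i)))
      {s | ∀ j, 0 ≤ s j} :=
  stmt9_general ℓ k hk m
end

section
/- For positive real numbers $D_1, \dots, D_m$ with $\sigma = \sum_j D_j$ and $m \ge 2$: $\sum_{q=1}^m \int_{[0,\infty)^{\{1,\dots,m\}\setminus\{q\}}} e^{-\sum_{k\neq q} D_k s_k}\Big(1 + \sum_{k\neq q} e^{-s_k}\Big)^{-\sigma}\,ds = \frac{\Gamma(D_1)\cdots\Gamma(D_m)}{\Gamma(\sigma)}$. -/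
/-!
Write `(1 + ∑ₖ e^{-sₖ})^{-σ} = Γ(σ)⁻¹ ∫₀^∞ t^{σ-1} e^{-(1 + ∑ₖ e^{-sₖ}) t} dt` and exchange the
integrals (Tonelli). For fixed `t` the integral over the orthant factors into one-dimensional
integrals, and the substitution `x = t e^{-s}` gives `∫₀^∞ e^{-D s - t e^{-s}} ds = t^{-D} γ(D, t)`,
with `γ` the lower incomplete gamma function. Hence the `q`-th term is
`Γ(σ)⁻¹ ∫₀^∞ e^{-t} t^{D_q - 1} ∏_{k ≠ q} γ(D_k, t) dt`, and the sum over `q` is the integral of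
the derivative of `∏ⱼ γ(Dⱼ, t)`, which increases from `0` to `∏ⱼ Γ(Dⱼ)`.
-/

open MeasureTheory Real Set Filter Topology

noncomputable def lowerGamma (c u : ℝ) : ℝ := ∫ x in 0..u, exp (-x) * x ^ (c - 1)

section lowerGamma

variable {c : ℝ}

lemma lowerGamma_zero (c : ℝ) : lowerGamma c 0 = 0 := intervalIntegral.integral_same

lemma lowerGamma_nonneg {u : ℝ} (hu : 0 ≤ u) : 0 ≤ lowerGamma c u :=
  intervalIntegral.integral_nonneg hu fun x hx => by have := hx.1; positivity

lemma intervalIntegrable_exp_neg_mul_rpow (hc : 0 < c) (a b : ℝ) :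
    IntervalIntegrable (fun x : ℝ => exp (-x) * x ^ (c - 1)) volume a b :=
  (intervalIntegral.intervalIntegrable_rpow' (by linarith)).continuousOn_mul (by fun_prop)

lemma continuous_lowerGamma (hc : 0 < c) : Continuous (lowerGamma c) :=
  intervalIntegral.continuous_primitive (intervalIntegrable_exp_neg_mul_rpow hc) 0

lemma hasDerivAt_lowerGamma (hc : 0 < c) {u : ℝ} (hu : 0 < u) :
    HasDerivAt (lowerGamma c) (exp (-u) * u ^ (c - 1)) u := by
  have hmeas : Measurable fun x : ℝ => exp (-x) * x ^ (c - 1) := by fun_prop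
  exact intervalIntegral.integral_hasDerivAt_right (intervalIntegrable_exp_neg_mul_rpow hc 0 u)
    hmeas.stronglyMeasurable.stronglyMeasurableAtFilter (by fun_prop (disch := exact Or.inl hu.ne'))

lemma tendsto_lowerGamma_atTop (hc : 0 < c) : Tendsto (lowerGamma c) atTop (𝓝 (Gamma c)) := by
  rw [Gamma_eq_integral hc]
  exact intervalIntegral_tendsto_integral_Ioi 0 (GammaIntegral_convergent hc) tendsto_id

end lowerGamma

section pi

variable {ι E 𝕜 : Type*} [Fintype ι] [RCLike 𝕜] [MeasurableSpace E] {μ : ι → Measure E}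
  [∀ i, SigmaFinite (μ i)]

lemma setIntegral_univ_pi_prod (f : ι → E → 𝕜) (S : ι → Set E) :
    ∫ x in univ.pi S, ∏ i, f i (x i) ∂Measure.pi μ = ∏ i, ∫ y in S i, f i y ∂μ i := by
  rw [Measure.restrict_pi_pi, integral_fintype_prod_eq_prod]

lemma integrableOn_univ_pi_prod {f : ι → E → 𝕜} {S : ι → Set E}
    (hf : ∀ i, IntegrableOn (f i) (S i) (μ i)) :
    IntegrableOn (fun x => ∏ i, f i (x i)) (univ.pi S) (Measure.pi μ) := by
  rw [IntegrableOn, Measure.restrict_pi_pi]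
  exact Integrable.fintype_prod hf

end pi

lemma image_mul_exp_neg_Ioi {u : ℝ} (hu : 0 < u) :
    (fun x => u * exp (-x)) '' Ioi 0 = Ioo 0 u := by
  ext y
  constructor
  · rintro ⟨x, hx, rfl⟩
    exact ⟨by positivity, mul_lt_of_lt_one_right hu (exp_lt_one_iff.mpr (neg_neg_of_pos hx))⟩
  · rintro ⟨hy, hyu⟩
    refine ⟨log (u / y), log_pos ((one_lt_div hy).mpr hyu), ?_⟩
    simp only [exp_neg, exp_log (div_pos hu hy)]
    field_simp

lemma integral_exp_neg_mul_sub_mul_exp_neg {c u : ℝ} (hu : 0 < u) :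
    ∫ x in Ioi 0, exp (-(c * x) - u * exp (-x)) = u ^ (-c) * lowerGamma c u := by
  have hderiv : ∀ x ∈ Ioi (0 : ℝ),
      HasDerivWithinAt (fun x => u * exp (-x)) (-(u * exp (-x))) (Ioi 0) x := fun x _ => by
    simpa using ((hasDerivAt_neg x).exp.const_mul u).hasDerivWithinAt
  have hinj : InjOn (fun x => u * exp (-x)) (Ioi 0) := fun x _ y _ h => by
    simpa using exp_injective (mul_left_cancel₀ hu.ne' h)
  have hsubst := integral_image_eq_integral_abs_deriv_smul measurableSet_Ioi hderiv hinj
    fun y => exp (-y) * y ^ (c - 1)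
  rw [image_mul_exp_neg_Ioi hu, ← integral_Ioc_eq_integral_Ioo,
    ← intervalIntegral.integral_of_le hu.le] at hsubst
  rw [lowerGamma, hsubst, ← integral_const_mul]
  refine setIntegral_congr_fun measurableSet_Ioi fun x _ => ?_
  rw [abs_neg, abs_of_pos (by positivity), smul_eq_mul, mul_rpow hu.le (exp_pos _).le,
    ← exp_mul, rpow_sub_one hu.ne', rpow_neg hu.le,
    show -(c * x) - u * exp (-x) = -x + -x * (c - 1) + -(u * exp (-x)) by ring, exp_add, exp_add]
  field_simp

lemma integrableOn_exp_neg_mul_sub_mul_exp_neg {c u : ℝ} (hc : 0 < c) (hu : 0 ≤ u) :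
    IntegrableOn (fun x => exp (-(c * x) - u * exp (-x))) (Ici 0) := by
  have hdom : IntegrableOn (fun x => exp (-c * x)) (Ici 0) :=
    (integrableOn_Ici_iff_integrableOn_Ioi).mpr (exp_neg_integrableOn_Ioi 0 hc)
  refine hdom.mono' (by fun_prop : Measurable _).aestronglyMeasurable (ae_of_all _ fun x => ?_)
  rw [norm_of_nonneg (exp_pos _).le, neg_mul]
  have : 0 ≤ u * exp (-x) := by positivity
  exact exp_le_exp.mpr (by linarith)

lemma ofReal_rpow_neg_eq_lintegral {σ b : ℝ} (hσ : 0 < σ) (hb : 0 < b) :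
    ENNReal.ofReal (b ^ (-σ)) =
      (ENNReal.ofReal (Gamma σ))⁻¹ *
        ∫⁻ t in Ioi 0, ENNReal.ofReal (t ^ (σ - 1) * exp (-(b * t))) := by
  have hval := integral_rpow_mul_exp_neg_mul_Ioi hσ hb
  have hint : IntegrableOn (fun t => t ^ (σ - 1) * exp (-(b * t))) (Ioi 0) :=
    Integrable.of_integral_ne_zero (by rw [hval]; positivity)
  rw [← ofReal_integral_eq_lintegral_ofReal hint, hval,
    ← ENNReal.ofReal_inv_of_pos (Gamma_pos_of_pos hσ), ← ENNReal.ofReal_mul (by positivity)]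
  · congr 1
    rw [one_div, inv_rpow hb.le, rpow_neg hb.le]
    field_simp [(Gamma_pos_of_pos hσ).ne']
  · filter_upwards [ae_restrict_mem measurableSet_Ioi] with t ht
    have := ht.out
    positivity

lemma exp_neg_sum_mul_rpow_mul_exp {ι : Type*} [Fintype ι] (D s : ι → ℝ) (t σ : ℝ) :
    exp (-∑ i, D i * s i) * (t ^ (σ - 1) * exp (-((1 + ∑ i, exp (-s i)) * t))) =
      t ^ (σ - 1) * exp (-t) * ∏ i, exp (-(D i * s i) - t * exp (-s i)) := by
  rw [← exp_sum, Finset.sum_sub_distrib, ← Finset.mul_sum, Finset.sum_neg_distrib,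
    show -((1 + ∑ i, exp (-s i)) * t) = -t - t * ∑ i, exp (-s i) by ring,
    exp_sub, exp_sub, exp_neg]
  ring

section orthant

variable {ι : Type*} [Fintype ι] {D : ι → ℝ} {a σ : ℝ}

lemma lintegral_orthant_rpow_mul_exp_prod (hD : ∀ i, 0 < D i) (hσ : σ = a + ∑ i, D i)
    {t : ℝ} (ht : 0 < t) :
    ∫⁻ s in univ.pi fun _ => Ici 0,
        ENNReal.ofReal (t ^ (σ - 1) * exp (-t) * ∏ i, exp (-(D i * s i) - t * exp (-s i))) =
      ENNReal.ofReal ((∏ i, lowerGamma (D i) t) * (exp (-t) * t ^ (a - 1))) := by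
  have hint := integrableOn_univ_pi_prod (μ := fun _ : ι => volume)
    fun i => integrableOn_exp_neg_mul_sub_mul_exp_neg (hD i) ht.le
  rw [volume_pi, ← ofReal_integral_eq_lintegral_ofReal (hint.const_mul _)
    (ae_of_all _ fun s => by positivity),
    integral_const_mul, setIntegral_univ_pi_prod fun i x => exp (-(D i * x) - t * exp (-x))]
  simp_rw [integral_Ici_eq_integral_Ioi, integral_exp_neg_mul_sub_mul_exp_neg ht,
    Finset.prod_mul_distrib, ← rpow_sum_of_pos ht, Finset.sum_neg_distrib]
  have hpow : t ^ (σ - 1) * t ^ (-∑ i, D i) = t ^ (a - 1) := by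
    rw [← rpow_add ht, hσ]; ring_nf
  congr 1
  linear_combination (exp (-t) * ∏ i, lowerGamma (D i) t) * hpow

lemma lintegral_orthant_eq_inv_Gamma_mul (hD : ∀ i, 0 < D i) (ha : 0 < a) (hσ : σ = a + ∑ i, D i) :
    ∫⁻ s in {s : ι → ℝ | ∀ i, 0 ≤ s i},
        ENNReal.ofReal (exp (-∑ i, D i * s i) * (1 + ∑ i, exp (-s i)) ^ (-σ)) =
      (ENNReal.ofReal (Gamma σ))⁻¹ *
        ∫⁻ t in Ioi 0, ENNReal.ofReal ((∏ i, lowerGamma (D i) t) * (exp (-t) * t ^ (a - 1))) := by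
  have hσ0 : 0 < σ := hσ ▸ add_pos_of_pos_of_nonneg ha (Finset.sum_nonneg fun i _ => (hD i).le)
  have hO : {s : ι → ℝ | ∀ i, 0 ≤ s i} = univ.pi fun _ => Ici 0 := by ext; simp [Pi.le_def]
  calc _ = ∫⁻ s in univ.pi fun _ => Ici 0, (ENNReal.ofReal (Gamma σ))⁻¹ * ∫⁻ t in Ioi 0,
          ENNReal.ofReal (t ^ (σ - 1) * exp (-t) * ∏ i, exp (-(D i * s i) - t * exp (-s i))) := by
        refine hO ▸ lintegral_congr fun s => ?_
        rw [ENNReal.ofReal_mul (exp_pos _).le, ofReal_rpow_neg_eq_lintegral hσ0 (by positivity),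
          mul_left_comm, ← lintegral_const_mul' _ _ ENNReal.ofReal_ne_top]
        congr 2
        funext t
        rw [← ENNReal.ofReal_mul (exp_pos _).le, exp_neg_sum_mul_rpow_mul_exp]
    _ = (ENNReal.ofReal (Gamma σ))⁻¹ * ∫⁻ t in Ioi 0, ∫⁻ s in univ.pi fun _ => Ici 0,
          ENNReal.ofReal (t ^ (σ - 1) * exp (-t) * ∏ i, exp (-(D i * s i) - t * exp (-s i))) := by
        rw [lintegral_const_mul' _ _ (by simp [Gamma_pos_of_pos hσ0]),
          lintegral_lintegral_swap (by fun_prop)]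
    _ = _ := by
        rw [setLIntegral_congr_fun measurableSet_Ioi
          fun t ht => lintegral_orthant_rpow_mul_exp_prod hD hσ ht]

lemma setIntegral_orthant_eq_inv_Gamma_mul (hD : ∀ i, 0 < D i) (ha : 0 < a)
    (hσ : σ = a + ∑ i, D i) :
    ∫ s in {s : ι → ℝ | ∀ i, 0 ≤ s i}, exp (-∑ i, D i * s i) * (1 + ∑ i, exp (-s i)) ^ (-σ) =
      (Gamma σ)⁻¹ * ∫ t in Ioi 0, (∏ i, lowerGamma (D i) t) * (exp (-t) * t ^ (a - 1)) := by
  have hσ0 : 0 < σ := hσ ▸ add_pos_of_pos_of_nonneg ha (Finset.sum_nonneg fun i _ => (hD i).le)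
  have := fun i => (continuous_lowerGamma (hD i)).measurable
  rw [integral_eq_lintegral_of_nonneg_ae (ae_of_all _ fun s => by positivity)
      (by fun_prop : Measurable _).aestronglyMeasurable,
    integral_eq_lintegral_of_nonneg_ae ?_ (by fun_prop : Measurable _).aestronglyMeasurable,
    lintegral_orthant_eq_inv_Gamma_mul hD ha hσ, ENNReal.toReal_mul, ENNReal.toReal_inv,
    ENNReal.toReal_ofReal (Gamma_pos_of_pos hσ0).le]
  filter_upwards [ae_restrict_mem measurableSet_Ioi] with t ht
  have := ht.out
  exact mul_nonneg (Finset.prod_nonneg fun i _ => lowerGamma_nonneg this.le) (by positivity)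

lemma sum_integral_deriv_prod_lowerGamma [DecidableEq ι] [Nonempty ι] (hD : ∀ i, 0 < D i) :
    ∑ q, ∫ t in Ioi 0,
        (∏ j ∈ Finset.univ.erase q, lowerGamma (D j) t) * (exp (-t) * t ^ (D q - 1)) =
      ∏ j, Gamma (D j) := by
  set g := fun q t =>
    (∏ j ∈ Finset.univ.erase q, lowerGamma (D j) t) * (exp (-t) * t ^ (D q - 1))
  have hderiv : ∀ t ∈ Ioi (0 : ℝ), HasDerivAt (fun t => ∏ j, lowerGamma (D j) t) (∑ q, g q t) t :=
    fun t ht => by simpa using HasDerivAt.fun_finsetProd fun q _ => hasDerivAt_lowerGamma (hD q) ht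
  have hg_nonneg : ∀ q, ∀ t ∈ Ioi (0 : ℝ), 0 ≤ g q t := fun q t ht => by
    have := ht.out
    exact mul_nonneg (Finset.prod_nonneg fun j _ => lowerGamma_nonneg this.le) (by positivity)
  have hcont : ContinuousWithinAt (fun t => ∏ j, lowerGamma (D j) t) (Ici 0) 0 :=
    (continuous_finsetProd _ fun j _ => continuous_lowerGamma (hD j)).continuousWithinAt
  have hlim : Tendsto (fun t => ∏ j, lowerGamma (D j) t) atTop (𝓝 (∏ j, Gamma (D j))) :=
    tendsto_finsetProd _ fun j _ => tendsto_lowerGamma_atTop (hD j)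
  have hint : IntegrableOn (fun t => ∑ q, g q t) (Ioi 0) :=
    integrableOn_Ioi_deriv_of_nonneg hcont hderiv
      (fun t ht => Finset.sum_nonneg fun q _ => hg_nonneg q t ht) hlim
  have hg_int : ∀ q, IntegrableOn (g q) (Ioi 0) := fun q => by
    have := fun i => (continuous_lowerGamma (hD i)).measurable
    refine hint.mono' (by fun_prop : Measurable (g q)).aestronglyMeasurable ?_
    filter_upwards [ae_restrict_mem measurableSet_Ioi] with t ht
    rw [norm_of_nonneg (hg_nonneg q t ht)]
    exact Finset.single_le_sum (fun q _ => hg_nonneg q t ht) (Finset.mem_univ q)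
  rw [← integral_finsetSum _ fun q _ => hg_int q,
    integral_Ioi_of_hasDerivAt_of_nonneg hcont hderiv
      (fun t ht => Finset.sum_nonneg fun q _ => hg_nonneg q t ht) hlim,
    Finset.prod_eq_zero (f := fun j => lowerGamma (D j) 0)
      (Finset.mem_univ (Classical.arbitrary ι)) (lowerGamma_zero _), sub_zero]

end orthant

theorem stmt13 (m : ℕ) (hm : 2 ≤ m) (D : Fin m → ℝ) (hD : ∀ j, 0 < D j) :
    (∑ q : Fin m,
      ∫ s in {s : {i : Fin m // i ≠ q} → ℝ | ∀ i, 0 ≤ s i},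
        Real.exp (-∑ i, D i.1 * s i) *
          (1 + ∑ i, Real.exp (-s i)) ^ (-(∑ j, D j)))
      = (∏ j, Real.Gamma (D j)) / Real.Gamma (∑ j, D j) := by
  have : Nonempty (Fin m) := ⟨⟨0, by omega⟩⟩
  have hmem : ∀ q j : Fin m, j ∈ Finset.univ.erase q ↔ j ≠ q := by simp
  have hσ : ∀ q, ∑ j, D j = D q + ∑ i : {i : Fin m // i ≠ q}, D i := fun q => by
    rw [← Finset.sum_subtype _ (hmem q), Finset.add_sum_erase _ _ (Finset.mem_univ q)]
  simp_rw [fun q => setIntegral_orthant_eq_inv_Gamma_mul (fun i : {i : Fin m // i ≠ q} => hD i)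
      (hD q) (hσ q),
    fun q t => (Finset.prod_subtype _ (hmem q) fun j => lowerGamma (D j) t).symm,
    ← Finset.mul_sum, sum_integral_deriv_prod_lowerGamma hD, inv_mul_eq_div]
end
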